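/- The code C of Construction 6 has the (h,d)-optimal access property for all h ≤ r and k ≤ d ≤ n − h simultaneously: let 1 ≤ h ≤ r and k ≤ d ≤ n − h, let f_1,…,f_h ∈ {1,…,n} be distinct failed node indices, and let R ⊆ {1,…,n}∖{f_1,…,f_h} with |R| = d. If (C_1,…,C_n) and (C'_1,…,C'_n) are codewords of C satisfying c_{v,a} = c'_{v,a} for every v ∈ R and every digit string a for which there exists i ∈ {1,…,h} with (d − k + i) dividing a_{f_i}, then C_{f_i} = C'_{f_i} for all i ∈ {1,…,h}. (By the counting identity, the number of coordinates accessed in each helper equals hl/(h+d−k), meeting the cut-set bound.) -/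

import Mathlib

/-!
Put `D = C - C'`. The matrices `A i` are weighted shifts of the `i`-th digit; they commute, and
`A i ^ s = γ ^ (i + 1) • 1`, so `A i - A j` is injective for `i ≠ j`. Multiplying the `i`-th term
of the parity checks `∑ i, A i ^ t D i` by `A i - A u` removes node `u` at the cost of one check,
and the new checks still hold modulo any space of vectors vanishing on a set of digit strings that
is closed under shifts of the `u`-th digit.

The failed nodes are recovered in order. For `f j`, with `p = d - k + j + 1`, work modulo the
vectors vanishing on `{a | p ∣ a (f j)}`: there the helpers (through the accessed coordinates) and
the nodes `f i`, `i < j` (already recovered) contribute nothing, and eliminating the remaining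
`n - d - j - 1` nodes leaves the checks `t < p` on a single node. Since every digit string is
obtained from one whose `f j`-th digit is divisible by `p` by fewer than `p` shifts of that digit,
these checks force `D (f j) = 0`.
-/

open Matrix Finset

section PowerSums

variable {ι ν R : Type*} [Fintype ι] [DecidableEq ι] [CommRing R]

def PowerSumsMem (S : Submodule R (ι → R)) (A : ν → Matrix ι ι R) (N : Finset ν)
    (Z : ν → ι → R) (T : ℕ) : Prop :=
  ∀ t < T, ∑ i ∈ N, A i ^ t *ᵥ Z i ∈ S

variable {S : Submodule R (ι → R)} {A : ν → Matrix ι ι R} {N : Finset ν} {Z : ν → ι → R}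
  {T : ℕ}

theorem pow_mulVec_mem {M : Matrix ι ι R} (hM : ∀ x ∈ S, M *ᵥ x ∈ S) {x : ι → R} (hx : x ∈ S)
    (t : ℕ) : M ^ t *ᵥ x ∈ S := by
  induction t with
  | zero => simpa using hx
  | succ t ih => rw [pow_succ', ← mulVec_mulVec]; exact hM _ ih

theorem PowerSumsMem.mono {T' : ℕ} (h : PowerSumsMem S A N Z T) (hT : T' ≤ T) :
    PowerSumsMem S A N Z T' :=
  fun t ht => h t (ht.trans_le hT)

variable [DecidableEq ν]

theorem PowerSumsMem.sdiff {K : Finset ν} (h : PowerSumsMem S A N Z T) (hKN : K ⊆ N)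
    (hK : ∀ i ∈ K, ∀ t < T, A i ^ t *ᵥ Z i ∈ S) : PowerSumsMem S A (N \ K) Z T := by
  intro t ht
  rw [← add_sub_cancel_right (∑ i ∈ N \ K, A i ^ t *ᵥ Z i) (∑ i ∈ K, A i ^ t *ᵥ Z i),
    sum_sdiff hKN]
  exact S.sub_mem (h t ht) (S.sum_mem fun i hi => hK i hi t ht)

theorem PowerSumsMem.erase_sub (hcomm : ∀ i j, Commute (A i) (A j)) {v : ν}
    (hv : ∀ x ∈ S, A v *ᵥ x ∈ S) (h : PowerSumsMem S A N Z (T + 1)) :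
    PowerSumsMem S A (N.erase v) (fun i => (A i - A v) *ᵥ Z i) T := by
  intro t ht
  have hterm : ∀ i, A i ^ t *ᵥ ((A i - A v) *ᵥ Z i) =
      A i ^ (t + 1) *ᵥ Z i - A v *ᵥ (A i ^ t *ᵥ Z i) := fun i => by
    rw [mulVec_mulVec, mulVec_mulVec, mul_sub, ← pow_succ, ((hcomm i v).pow_left t).eq,
      sub_mulVec]
  rw [sum_erase _ (by simp), sum_congr rfl fun i _ => hterm i, sum_sub_distrib, ← mulVec_sum]
  exact S.sub_mem (h (t + 1) (by omega)) (hv _ (h t (by omega)))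

theorem PowerSumsMem.exists_sdiff (hcomm : ∀ i j, Commute (A i) (A j))
    (hinj : Pairwise fun i j => ∀ x, (A i - A j) *ᵥ x = 0 → x = 0) {U : Finset ν}
    (hU : ∀ u ∈ U, ∀ x ∈ S, A u *ᵥ x ∈ S) (h : PowerSumsMem S A N Z (T + #U)) :
    ∃ Z' : ν → ι → R, PowerSumsMem S A (N \ U) Z' T ∧ ∀ i ∈ N \ U, Z' i = 0 → Z i = 0 := by
  induction U using Finset.induction_on generalizing N Z with
  | empty => exact ⟨Z, by simpa using h, fun _ _ => id⟩
  | insert u U hu ih =>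
    rw [card_insert_of_notMem hu, ← add_assoc] at h
    obtain ⟨Z', hZ', hZ'Z⟩ := ih (fun w hw => hU w (mem_insert_of_mem hw))
      (h.erase_sub hcomm (hU u (mem_insert_self u U)))
    rw [sdiff_insert, ← erase_sdiff_comm]
    exact ⟨Z', hZ', fun i hi hi0 =>
      hinj (ne_of_mem_erase (mem_sdiff.1 hi).1) _ (hZ'Z i hi hi0)⟩

end PowerSums

section WeightedShift

variable {ι R : Type*} [Fintype ι]

theorem commute_of_mulVec_eq [CommSemiring R] {M N : Matrix ι ι R} {σ τ : ι → ι} {c d : ι → R}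
    (hM : ∀ x, M *ᵥ x = fun a => c a * x (σ a)) (hN : ∀ x, N *ᵥ x = fun a => d a * x (τ a))
    (hστ : ∀ a, σ (τ a) = τ (σ a)) (hc : ∀ a, c (τ a) = c a) (hd : ∀ a, d (σ a) = d a) :
    Commute M N := by
  rw [Commute, SemiconjBy, ext_iff_mulVec]
  intro x
  funext a
  simp only [← mulVec_mulVec, hM, hN, hστ, hc, hd]
  ring

variable [DecidableEq ι]

theorem mulVec_of_ite_eq [CommSemiring R] (σ : ι → ι) (c : ι → R) (x : ι → R) :
    (of fun a b => if b = σ a then c a else 0) *ᵥ x = fun a => c a * x (σ a) := by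
  ext a
  simp [mulVec, dotProduct, ite_mul]

theorem pow_mulVec_apply_of_mulVec_eq [CommSemiring R] {M : Matrix ι ι R} {σ : ι → ι}
    {c : ι → R} (hM : ∀ x, M *ᵥ x = fun a => c a * x (σ a)) (t : ℕ) (x : ι → R) (a : ι) :
    (M ^ t *ᵥ x) a = (∏ k ∈ range t, c (σ^[k] a)) * x (σ^[t] a) := by
  induction t generalizing x with
  | zero => simp
  | succ t ih =>
    rw [pow_succ, ← mulVec_mulVec, ih, hM, prod_range_succ, Function.iterate_succ_apply',
      mul_assoc]

theorem eq_zero_of_sub_mulVec_eq_zero [Field R] {M N : Matrix ι ι R} {c c' : R} {m : ℕ}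
    (hMN : Commute M N) (hM : M ^ m = c • 1) (hN : N ^ m = c' • 1) (hcc' : c ≠ c')
    {x : ι → R} (hx : (M - N) *ᵥ x = 0) : x = 0 := by
  have h := congrArg ((∑ i ∈ range m, M ^ i * N ^ (m - 1 - i)) *ᵥ ·) hx
  simp only [mulVec_mulVec, hMN.geom_sum₂_mul, hM, hN, ← sub_smul, smul_mulVec, one_mulVec,
    mulVec_zero] at h
  exact (smul_eq_zero.1 h).resolve_left (sub_ne_zero.2 hcc')

end WeightedShift

section Digits

variable {n s : ℕ}

def shiftDigit (a : Fin n → Fin s) (i : Fin n) (t : ℕ) : Fin n → Fin s :=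
  Function.update a i ⟨((a i : ℕ) + t) % s, Nat.mod_lt _ (a i).pos⟩

theorem shiftDigit_apply_self (a : Fin n → Fin s) (i : Fin n) (t : ℕ) :
    (shiftDigit a i t i : ℕ) = ((a i : ℕ) + t) % s := by
  simp [shiftDigit]

theorem shiftDigit_apply_of_ne (a : Fin n → Fin s) {i j : Fin n} (h : j ≠ i) (t : ℕ) :
    shiftDigit a i t j = a j :=
  Function.update_of_ne h _ _

theorem shiftDigit_zero (a : Fin n → Fin s) (i : Fin n) : shiftDigit a i 0 = a := by
  rw [shiftDigit, Function.update_eq_self_iff]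
  exact Fin.ext (by simp [Nat.mod_eq_of_lt (a i).isLt])

theorem shiftDigit_card (a : Fin n → Fin s) (i : Fin n) : shiftDigit a i s = a := by
  rw [shiftDigit, Function.update_eq_self_iff]
  exact Fin.ext (by simp [Nat.mod_eq_of_lt (a i).isLt])

theorem shiftDigit_shiftDigit (a : Fin n → Fin s) (i : Fin n) (t t' : ℕ) :
    shiftDigit (shiftDigit a i t) i t' = shiftDigit a i (t + t') := by
  simp only [shiftDigit, Function.update_self, Function.update_idem, Nat.mod_add_mod, add_assoc]

theorem iterate_shiftDigit (a : Fin n → Fin s) (i : Fin n) (t : ℕ) :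
    (shiftDigit · i 1)^[t] a = shiftDigit a i t := by
  induction t with
  | zero => exact (shiftDigit_zero a i).symm
  | succ t ih => rw [Function.iterate_succ_apply', ih, shiftDigit_shiftDigit]

theorem shiftDigit_comm (a : Fin n → Fin s) {i j : Fin n} (h : i ≠ j) (t t' : ℕ) :
    shiftDigit (shiftDigit a j t') i t = shiftDigit (shiftDigit a i t) j t' := by
  simp only [shiftDigit, Function.update_of_ne h, Function.update_of_ne h.symm]
  exact (Function.update_comm h _ _ _).symm

theorem exists_shiftDigit_eq {p : ℕ} (hp : 0 < p) (b : Fin n → Fin s) (v : Fin n) :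
    ∃ a t, t < p ∧ p ∣ (a v : ℕ) ∧ shiftDigit a v t = b := by
  refine ⟨Function.update b v ⟨b v / p * p, (Nat.div_mul_le_self _ _).trans_lt (b v).isLt⟩,
    b v % p, Nat.mod_lt _ hp, by simp, ?_⟩
  simp only [shiftDigit, Function.update_self, Function.update_idem, Nat.div_add_mod',
    Nat.mod_eq_of_lt (b v).isLt, Function.update_eq_self]

theorem prod_range_shiftDigit [NeZero s] {M : Type*} [CommMonoid M] (g : Fin s → M)
    (a : Fin n → Fin s) (i : Fin n) : ∏ k ∈ range s, g (shiftDigit a i k i) = ∏ u, g u := by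
  have hshift : ∀ k : Fin s, shiftDigit a i k i = a i + k := fun k =>
    Fin.ext (by rw [shiftDigit_apply_self, Fin.val_add])
  rw [← Fin.prod_univ_eq_prod_range (fun k => g (shiftDigit a i k i)),
    ← Equiv.prod_comp (Equiv.addLeft (a i)) g]
  exact prod_congr rfl fun k _ => congrArg g (hshift k)

end Digits

section FiniteField

variable {F : Type*} [Field F] [Fintype F] {γ : F}

theorem ne_zero_of_forall_eq_pow (hγ : ∀ x : F, x ≠ 0 → ∃ m : ℕ, x = γ ^ m)
    (hF : 2 < Fintype.card F) : γ ≠ 0 := by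
  classical
  rintro rfl
  have hsub : (univ : Finset F) ⊆ {0, 1} := fun x _ => by
    rcases eq_or_ne x 0 with rfl | hx
    · simp
    obtain ⟨m, rfl⟩ := hγ x hx
    rcases m with _ | m <;> simp
  have := (card_le_card hsub).trans card_le_two
  rw [card_univ] at this
  omega

theorem pow_injOn_Iio_card_sub_one (hγ : ∀ x : F, x ≠ 0 → ∃ m : ℕ, x = γ ^ m) (hγ0 : γ ≠ 0) :
    Set.InjOn (γ ^ ·) (Set.Iio (Fintype.card F - 1)) := by
  classical
  have horder : orderOf (Units.mk0 γ hγ0) = Fintype.card F - 1 := by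
    rw [orderOf_eq_card_of_forall_mem_zpowers, Nat.card_eq_fintype_card, Fintype.card_units]
    intro x
    obtain ⟨m, hm⟩ := hγ x x.ne_zero
    exact Subgroup.mem_zpowers_iff.2 ⟨m, Units.ext (by simp [hm])⟩
  rw [← horder, ← orderOf_units, Units.val_mk0]
  exact pow_injOn_Iio_orderOf

theorem injective_pow_succ_of_forall_eq_pow (hγ : ∀ x : F, x ≠ 0 → ∃ m : ℕ, x = γ ^ m)
    (hγ0 : γ ≠ 0) {n : ℕ} (hF : n + 1 ≤ Fintype.card F) :
    Function.Injective fun i : Fin n => γ ^ ((i : ℕ) + 1) := by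
  intro i j hij
  simp only [pow_succ, mul_left_inj' hγ0] at hij
  exact Fin.ext (pow_injOn_Iio_card_sub_one hγ hγ0 (by simp only [Set.mem_Iio]; omega)
    (by simp only [Set.mem_Iio]; omega) hij)

end FiniteField

section Construction

variable {n s : ℕ}

def vanishingOnDvd (R : Type*) [Semiring R] (v : Fin n) (p : ℕ) :
    Submodule R ((Fin n → Fin s) → R) :=
  Submodule.pi {a | p ∣ (a v : ℕ)} fun _ => ⊥

variable {F : Type*} [Field F]

theorem mem_vanishingOnDvd {v : Fin n} {p : ℕ} {x : (Fin n → Fin s) → F} :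
    x ∈ vanishingOnDvd F v p ↔ ∀ a : Fin n → Fin s, p ∣ (a v : ℕ) → x a = 0 := by
  simp [vanishingOnDvd, Submodule.mem_pi]

def IsDigitShift (A : Fin n → Matrix (Fin n → Fin s) (Fin n → Fin s) F)
    (lam : Fin n → Fin s → F) : Prop :=
  ∀ i x, A i *ᵥ x = fun a => lam i (a i) * x (shiftDigit a i 1)

variable {A : Fin n → Matrix (Fin n → Fin s) (Fin n → Fin s) F} {lam : Fin n → Fin s → F}

theorem pow_mulVec_apply (hA : IsDigitShift A lam)
    (i : Fin n) (t : ℕ) (x : (Fin n → Fin s) → F) (a : Fin n → Fin s) :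
    (A i ^ t *ᵥ x) a = (∏ k ∈ range t, lam i (shiftDigit a i k i)) * x (shiftDigit a i t) := by
  simp only [pow_mulVec_apply_of_mulVec_eq (hA i), iterate_shiftDigit]

theorem commute_of_mulVec_eq_shiftDigit
    (hA : IsDigitShift A lam) (i j : Fin n) :
    Commute (A i) (A j) := by
  rcases eq_or_ne i j with rfl | hij
  · exact Commute.refl _
  exact commute_of_mulVec_eq (hA i) (hA j) (fun a => shiftDigit_comm a hij 1 1)
    (fun a => by simp only [shiftDigit_apply_of_ne a hij])
    (fun a => by simp only [shiftDigit_apply_of_ne a hij.symm])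

theorem pow_card_eq_prod_smul [NeZero s]
    (hA : IsDigitShift A lam) (i : Fin n) :
    A i ^ s = (∏ u, lam i u) • 1 := by
  refine ext_iff_mulVec.2 fun x => funext fun a => ?_
  rw [pow_mulVec_apply hA, prod_range_shiftDigit, smul_mulVec, one_mulVec, Pi.smul_apply,
    smul_eq_mul, shiftDigit_card]

theorem pairwise_eq_zero_of_sub_mulVec_eq_zero [NeZero s]
    (hA : IsDigitShift A lam)
    (hlam : Function.Injective fun i => ∏ u, lam i u) :
    Pairwise fun i j => ∀ x, (A i - A j) *ᵥ x = 0 → x = 0 := fun i j hij _ =>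
  eq_zero_of_sub_mulVec_eq_zero (commute_of_mulVec_eq_shiftDigit hA i j)
    (pow_card_eq_prod_smul hA i) (pow_card_eq_prod_smul hA j) (hlam.ne hij)

theorem mulVec_mem_vanishingOnDvd
    (hA : IsDigitShift A lam) {i v : Fin n}
    (hiv : i ≠ v) {p : ℕ} {x : (Fin n → Fin s) → F} (hx : x ∈ vanishingOnDvd F v p) :
    A i *ᵥ x ∈ vanishingOnDvd F v p := by
  rw [mem_vanishingOnDvd] at hx ⊢
  intro a ha
  rw [hA]
  exact mul_eq_zero_of_right _ (hx _ (by rwa [shiftDigit_apply_of_ne a hiv.symm]))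

theorem eq_zero_of_pow_mulVec_mem
    (hA : IsDigitShift A lam)
    (hlam : ∀ i u, lam i u ≠ 0) {v : Fin n} {p : ℕ} (hp : 0 < p) {x : (Fin n → Fin s) → F}
    (hx : ∀ t < p, A v ^ t *ᵥ x ∈ vanishingOnDvd F v p) : x = 0 := by
  funext b
  obtain ⟨a, t, htp, hpa, rfl⟩ := exists_shiftDigit_eq hp b v
  have h := mem_vanishingOnDvd.1 (hx t htp) a hpa
  rw [pow_mulVec_apply hA] at h
  exact (mul_eq_zero.1 h).resolve_left (prod_ne_zero_iff.2 fun k _ => hlam _ _)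

theorem eq_zero_of_vanishingOnDvd
    (hA : IsDigitShift A lam)
    (hlam : ∀ i u, lam i u ≠ 0) (hinj : Pairwise fun i j => ∀ x, (A i - A j) *ᵥ x = 0 → x = 0)
    {D : Fin n → (Fin n → Fin s) → F} {T : ℕ} (hD : ∀ t < T, ∑ i, A i ^ t *ᵥ D i = 0)
    {v : Fin n} {p : ℕ} (hp : 0 < p) {K : Finset (Fin n)} (hvK : v ∉ K)
    (hK : ∀ i ∈ K, D i ∈ vanishingOnDvd F v p) (hT : p + (n - 1 - #K) ≤ T) : D v = 0 := by
  have hinv : ∀ i ≠ v, ∀ x ∈ vanishingOnDvd F v p, A i *ᵥ x ∈ vanishingOnDvd F v p :=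
    fun i hi x hx => mulVec_mem_vanishingOnDvd hA hi hx
  have hall : PowerSumsMem (vanishingOnDvd F v p) A univ D T := fun t ht => by
    rw [hD t ht]; exact zero_mem _
  have hrest := hall.sdiff (subset_univ K) fun i hi t _ =>
    pow_mulVec_mem (hinv i (ne_of_mem_of_not_mem hi hvK)) (hK i hi) t
  have hv : v ∈ univ \ K := by simpa using hvK
  have hcard : #((univ \ K).erase v) = n - 1 - #K := by
    rw [card_erase_of_mem hv, card_univ_sdiff, Fintype.card_fin]; omega
  obtain ⟨Z, hZ, hZD⟩ := (hrest.mono (T' := p + #((univ \ K).erase v)) (by omega)).exists_sdiff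
    (commute_of_mulVec_eq_shiftDigit hA) hinj fun i hi => hinv i (ne_of_mem_erase hi)
  rw [sdiff_erase_self hv] at hZ hZD
  refine hZD v (mem_singleton_self v)
    (eq_zero_of_pow_mulVec_mem (v := v) hA hlam hp fun t ht => ?_)
  simpa using hZ t ht

theorem eq_zero_of_helpers_vanish
    (hA : IsDigitShift A lam)
    (hlam : ∀ i u, lam i u ≠ 0) (hinj : Pairwise fun i j => ∀ x, (A i - A j) *ᵥ x = 0 → x = 0)
    {D : Fin n → (Fin n → Fin s) → F} {T : ℕ} (hD : ∀ t < T, ∑ i, A i ^ t *ᵥ D i = 0)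
    {h : ℕ} {f : Fin h → Fin n} (hf : Function.Injective f) {R : Finset (Fin n)}
    (hfR : ∀ i, f i ∉ R) {e : ℕ} (hT : e + n ≤ #R + T)
    (hR : ∀ v ∈ R, ∀ a : Fin n → Fin s, (∃ i : Fin h, (e + i + 1) ∣ (a (f i) : ℕ)) → D v a = 0)
    (j : Fin h) : D (f j) = 0 := by
  induction j using Fin.strong_induction_on with
  | h j ih =>
  set K := R ∪ (Iio j).image f
  have hjK : f j ∉ K := by simp [K, hfR, hf.eq_iff]
  have hRf : Disjoint R ((Iio j).image f) := disjoint_right.2 fun _ hi => by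
    obtain ⟨k, _, rfl⟩ := mem_image.1 hi
    exact hfR k
  have hK : #K = #R + j := by
    rw [card_union_of_disjoint hRf, card_image_of_injective _ hf, Fin.card_Iio]
  have hKn : #K + 1 ≤ n := by
    simpa [card_insert_of_notMem hjK] using card_le_univ (insert (f j) K)
  refine eq_zero_of_vanishingOnDvd hA hlam hinj hD (p := e + j + 1) (by omega) hjK
    (fun i hi => ?_) (by omega)
  rcases mem_union.1 hi with hi | hi
  · exact mem_vanishingOnDvd.2 fun a ha => hR i hi a ⟨j, ha⟩
  · obtain ⟨k, hk, rfl⟩ := mem_image.1 hi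
    rw [ih k (mem_Iio.1 hk)]
    exact zero_mem _

end Construction

open Matrix in
theorem construction6_hd_optimal_access_general
    (F : Type*) [Field F] [Fintype F]
    (n r s : ℕ) (hr : 1 ≤ r) (hrn : r < n)
    (hF : n + 1 ≤ Fintype.card F)
    (γ : F) (hγprim : ∀ x : F, x ≠ 0 → ∃ m : ℕ, x = γ ^ m)
    (lam : Fin n → Fin s → F)
    (hlam : ∀ (i : Fin n) (u : Fin s),
      lam i u = if (u : ℕ) = 0 then γ ^ ((i : ℕ) + 1) else 1)
    (A : Fin n → Matrix (Fin n → Fin s) (Fin n → Fin s) F)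
    (hA : ∀ i : Fin n,
      A i = Matrix.of fun a b : Fin n → Fin s =>
        if b = Function.update a i
            ⟨((a i : ℕ) + 1) % s, Nat.mod_lt _ (a i).pos⟩
        then lam i (a i) else 0)
    (C C' : Fin n → (Fin n → Fin s) → F)
    (hC : ∀ t < r, ∑ i, (A i ^ t) *ᵥ C i = 0)
    (hC' : ∀ t < r, ∑ i, (A i ^ t) *ᵥ C' i = 0)
    (h d : ℕ) (hd1 : n - r ≤ d)
    (f : Fin h → Fin n) (hf : Function.Injective f)
    (R : Finset (Fin n)) (hR : R.card = d)
    (hdisj : ∀ i : Fin h, f i ∉ R)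
    (hrep : ∀ v ∈ R, ∀ a : Fin n → Fin s,
      (∃ i : Fin h, (d - (n - r) + (i : ℕ) + 1) ∣ (a (f i) : ℕ)) →
      C v a = C' v a) :
    ∀ i : Fin h, C (f i) = C' (f i) := by
  rcases isEmpty_or_nonempty (Fin s) with _ | ⟨⟨u⟩⟩
  · exact fun i => funext fun a => isEmptyElim (a (f i))
  have : NeZero s := ⟨u.pos.ne'⟩
  have hAx : IsDigitShift A lam := fun i x => by
    rw [hA i]
    exact mulVec_of_ite_eq _ _ x
  have hγ0 : γ ≠ 0 := ne_zero_of_forall_eq_pow hγprim (by omega)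
  have hlam0 : ∀ i u, lam i u ≠ 0 := fun i u => by
    rw [hlam]
    split_ifs <;> simp [hγ0]
  have hprod : (fun i => ∏ u, lam i u) = fun i : Fin n => γ ^ ((i : ℕ) + 1) := by
    funext i
    simp [hlam, Fin.val_eq_zero_iff]
  have hinj := pairwise_eq_zero_of_sub_mulVec_eq_zero hAx
    (hprod ▸ injective_pow_succ_of_forall_eq_pow hγprim hγ0 hF)
  have hD : ∀ t < r, ∑ i, A i ^ t *ᵥ (C i - C' i) = 0 := fun t ht => by
    simp only [mulVec_sub, sum_sub_distrib, hC t ht, hC' t ht, sub_zero]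
  intro i
  exact sub_eq_zero.1 (eq_zero_of_helpers_vanish hAx hlam0 hinj hD hf hdisj (by omega)
    (fun v hv a ha => sub_eq_zero.2 (hrep v hv a ha)) i)

open Matrix in
/-- Construction 6 (permutation-type code with `s = lcm(1,…,r)`) has the
`(h,d)`-optimal access property for all `h ≤ r` and `k ≤ d ≤ n - h`
simultaneously: the `h` failed nodes `f_1,…,f_h` are determined by the
coordinates `{c_{v,a} : ∃ i, (d-k+i) ∣ a_{f_i}}` accessed in any `d` helpers. -/
theorem construction6_hd_optimal_access
    (F : Type*) [Field F] [Fintype F]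
    (n r s : ℕ) (hr : 1 ≤ r) (hrn : r < n)
    (hs : s = (Finset.Icc 1 r).lcm id)
    (hF : n + 1 ≤ Fintype.card F)
    (γ : F) (hγprim : ∀ x : F, x ≠ 0 → ∃ m : ℕ, x = γ ^ m)
    (lam : Fin n → Fin s → F)
    (hlam : ∀ (i : Fin n) (u : Fin s),
      lam i u = if (u : ℕ) = 0 then γ ^ ((i : ℕ) + 1) else 1)
    (A : Fin n → Matrix (Fin n → Fin s) (Fin n → Fin s) F)
    (hA : ∀ i : Fin n,
      A i = Matrix.of fun a b : Fin n → Fin s =>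
        if b = Function.update a i
            ⟨((a i : ℕ) + 1) % s, Nat.mod_lt _ (a i).pos⟩
        then lam i (a i) else 0)
    (C C' : Fin n → (Fin n → Fin s) → F)
    (hC : ∀ t < r, ∑ i, (A i ^ t) *ᵥ C i = 0)
    (hC' : ∀ t < r, ∑ i, (A i ^ t) *ᵥ C' i = 0)
    (h d : ℕ) (hh1 : 1 ≤ h) (hhr : h ≤ r) (hd1 : n - r ≤ d) (hd2 : d ≤ n - h)
    (f : Fin h → Fin n) (hf : Function.Injective f)
    (R : Finset (Fin n)) (hR : R.card = d)
    (hdisj : ∀ i : Fin h, f i ∉ R)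
    (hrep : ∀ v ∈ R, ∀ a : Fin n → Fin s,
      (∃ i : Fin h, (d - (n - r) + (i : ℕ) + 1) ∣ (a (f i) : ℕ)) →
      C v a = C' v a) :
    ∀ i : Fin h, C (f i) = C' (f i) :=
  construction6_hd_optimal_access_general F n r s hr hrn hF γ hγprim lam hlam A hA C C' hC hC' h d
    hd1 f hf R hR hdisj hrep
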